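/- arXiv:2301.05162 — 4 statements merged into one kernel-verified Lean document; each statement's English description precedes it below -/
import Mathlib

section
/- Fix a countable family R of sets (resources), and for each finite Q ⊆ R a product Π_Q = Π_{x∈Q} x. Define C(a,b) to be the object of Label_{P_f(R)} given by the function from the disjoint union over Q ∈ P_f(R) of Set(a × Π_Q, b × Π_Q) to P_f(R) sending f : a × Π_Q → b × Π_Q to Q, with bifunctorial action by pre- and post-composition. Then C, together with idt(⋆) = (∅, id_{a×1}), zero(⋆) = (∅, id), seq((P,f),(Q,g)) = (P ∪ Q, g_Q^{P∪Q} ∘ f_P^{P∪Q}) (where h_{Q'}^{Q} denotes the extension of h : a × Π_{Q'} → b × Π_{Q'} to a × Π_Q → b × Π_Q leaving the components in Q∖Q' unchanged, for Q' ⊆ Q), and par((Q,f),(Q',f')) defined for disjoint Q, Q' as (Q ∪ Q', (id × ⟨π_Q, π_{Q'}⟩^{-1}) ∘ m^{-1} ∘ (f × f') ∘ m ∘ (id × ⟨π_Q, π_{Q'}⟩)) (with m the middle-four interchange and ⟨π_Q, π_{Q'}⟩ : Π_{Q∪Q'} → Π_Q × Π_{Q'} invertible since Q ∩ Q' = ∅),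 is a Label_{P_f(R)}-Freyd category over (Set, ×, 1). -/
set_option linter.unusedVariables false
open CategoryTheory CategoryTheory.Limits MonoidalCategory

universe w v u v₁ u₁ v₂ u₂ v₃ u₃

/-- The data of a monoidal structure on a category (tensor, unit, structural morphisms). -/
structure MonStrData (V : Type u) [Category.{v} V] where
  t : V → V → V
  tHom : ∀ {X₁ Y₁ X₂ Y₂ : V}, (X₁ ⟶ Y₁) → (X₂ ⟶ Y₂) → (t X₁ X₂ ⟶ t Y₁ Y₂)
  unit : V
  aHom : ∀ X Y Z : V, t (t X Y) Z ⟶ t X (t Y Z)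
  aInv : ∀ X Y Z : V, t X (t Y Z) ⟶ t (t X Y) Z
  lHom : ∀ X : V, t unit X ⟶ X
  lInv : ∀ X : V, X ⟶ t unit X
  rHom : ∀ X : V, t X unit ⟶ X
  rInv : ∀ X : V, X ⟶ t X unit

/-- The data of a monoidal structure is an actual monoidal structure. -/
structure IsMonStr {V : Type u} [Category.{v} V] (m : MonStrData V) : Prop where
  tHom_id : ∀ X Y : V, m.tHom (𝟙 X) (𝟙 Y) = 𝟙 (m.t X Y)
  tHom_comp : ∀ {X₁ Y₁ Z₁ X₂ Y₂ Z₂ : V} (f₁ : X₁ ⟶ Y₁) (g₁ : Y₁ ⟶ Z₁) (f₂ : X₂ ⟶ Y₂)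
    (g₂ : Y₂ ⟶ Z₂), m.tHom (f₁ ≫ g₁) (f₂ ≫ g₂) = m.tHom f₁ f₂ ≫ m.tHom g₁ g₂
  a_hom_inv : ∀ X Y Z : V, m.aHom X Y Z ≫ m.aInv X Y Z = 𝟙 _
  a_inv_hom : ∀ X Y Z : V, m.aInv X Y Z ≫ m.aHom X Y Z = 𝟙 _
  a_nat : ∀ {X₁ Y₁ X₂ Y₂ X₃ Y₃ : V} (f₁ : X₁ ⟶ Y₁) (f₂ : X₂ ⟶ Y₂) (f₃ : X₃ ⟶ Y₃),
    m.tHom (m.tHom f₁ f₂) f₃ ≫ m.aHom Y₁ Y₂ Y₃ = m.aHom X₁ X₂ X₃ ≫ m.tHom f₁ (m.tHom f₂ f₃)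
  l_hom_inv : ∀ X : V, m.lHom X ≫ m.lInv X = 𝟙 _
  l_inv_hom : ∀ X : V, m.lInv X ≫ m.lHom X = 𝟙 _
  l_nat : ∀ {X Y : V} (f : X ⟶ Y), m.tHom (𝟙 m.unit) f ≫ m.lHom Y = m.lHom X ≫ f
  r_hom_inv : ∀ X : V, m.rHom X ≫ m.rInv X = 𝟙 _
  r_inv_hom : ∀ X : V, m.rInv X ≫ m.rHom X = 𝟙 _
  r_nat : ∀ {X Y : V} (f : X ⟶ Y), m.tHom f (𝟙 m.unit) ≫ m.rHom Y = m.rHom X ≫ f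
  triangle : ∀ X Y : V,
    m.aHom X m.unit Y ≫ m.tHom (𝟙 X) (m.lHom Y) = m.tHom (m.rHom X) (𝟙 Y)
  pentagon : ∀ W X Y Z : V,
    m.tHom (m.aHom W X Y) (𝟙 Z) ≫ m.aHom W (m.t X Y) Z ≫ m.tHom (𝟙 W) (m.aHom X Y Z)
      = m.aHom (m.t W X) Y Z ≫ m.aHom W X (m.t Y Z)

/-- The data of a duoidal category structure: a "parallel" monoidal structure `p = (∗, J)`,
a "sequential" monoidal structure `s = (∘, I)`, the interchange `ζ`, and `Δ`, `∇`, `ε`. -/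
structure DuoidalData (V : Type u) [Category.{v} V] where
  p : MonStrData V
  s : MonStrData V
  zeta : ∀ A B C D : V, p.t (s.t A B) (s.t C D) ⟶ s.t (p.t A C) (p.t B D)
  delta : p.unit ⟶ s.t p.unit p.unit
  nabla : p.t s.unit s.unit ⟶ s.unit
  eps : p.unit ⟶ s.unit

/-- The data of a duoidal structure is an actual duoidal category structure. -/
structure IsDuoidal {V : Type u} [Category.{v} V] (d : DuoidalData V) : Prop where
  p_mon : IsMonStr d.p
  s_mon : IsMonStr d.s
  zeta_nat : ∀ {A A' B B' C C' D D' : V} (f : A ⟶ A') (g : B ⟶ B') (h : C ⟶ C') (k : D ⟶ D'),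
    d.p.tHom (d.s.tHom f g) (d.s.tHom h k) ≫ d.zeta A' B' C' D'
      = d.zeta A B C D ≫ d.s.tHom (d.p.tHom f h) (d.p.tHom g k)
  -- (I, ∇, ε) is a monoid in (V, ∗, J)
  nabla_assoc : d.p.tHom d.nabla (𝟙 d.s.unit) ≫ d.nabla
      = d.p.aHom d.s.unit d.s.unit d.s.unit ≫ d.p.tHom (𝟙 d.s.unit) d.nabla ≫ d.nabla
  nabla_eps_left : d.p.tHom d.eps (𝟙 d.s.unit) ≫ d.nabla = d.p.lHom d.s.unit
  nabla_eps_right : d.p.tHom (𝟙 d.s.unit) d.eps ≫ d.nabla = d.p.rHom d.s.unit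
  -- (J, Δ, ε) is a comonoid in (V, ∘, I)
  delta_coassoc : d.delta ≫ d.s.tHom d.delta (𝟙 d.p.unit) ≫ d.s.aHom d.p.unit d.p.unit d.p.unit
      = d.delta ≫ d.s.tHom (𝟙 d.p.unit) d.delta
  delta_eps_left : d.delta ≫ d.s.tHom d.eps (𝟙 d.p.unit) ≫ d.s.lHom d.p.unit = 𝟙 d.p.unit
  delta_eps_right : d.delta ≫ d.s.tHom (𝟙 d.p.unit) d.eps ≫ d.s.rHom d.p.unit = 𝟙 d.p.unit
  -- compatibility of ζ with the associator of ∗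
  hexagon_p : ∀ A B C D E F : V,
    d.p.tHom (d.zeta A B C D) (𝟙 (d.s.t E F)) ≫ d.zeta (d.p.t A C) (d.p.t B D) E F
        ≫ d.s.tHom (d.p.aHom A C E) (d.p.aHom B D F)
      = d.p.aHom (d.s.t A B) (d.s.t C D) (d.s.t E F) ≫ d.p.tHom (𝟙 (d.s.t A B)) (d.zeta C D E F)
        ≫ d.zeta A B (d.p.t C E) (d.p.t D F)
  -- compatibility of ζ with the associator of ∘
  hexagon_s : ∀ A B C D E F : V,
    d.zeta (d.s.t A B) C (d.s.t D E) F ≫ d.s.tHom (d.zeta A B D E) (𝟙 (d.p.t C F))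
        ≫ d.s.aHom (d.p.t A D) (d.p.t B E) (d.p.t C F)
      = d.p.tHom (d.s.aHom A B C) (d.s.aHom D E F) ≫ d.zeta A (d.s.t B C) D (d.s.t E F)
        ≫ d.s.tHom (𝟙 (d.p.t A D)) (d.zeta B C E F)
  -- compatibility of ζ with the unitors of ∗ via Δ
  unit_p_left : ∀ A B : V,
    d.p.tHom d.delta (𝟙 (d.s.t A B)) ≫ d.zeta d.p.unit d.p.unit A B
        ≫ d.s.tHom (d.p.lHom A) (d.p.lHom B)
      = d.p.lHom (d.s.t A B)
  unit_p_right : ∀ A B : V,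
    d.p.tHom (𝟙 (d.s.t A B)) d.delta ≫ d.zeta A B d.p.unit d.p.unit
        ≫ d.s.tHom (d.p.rHom A) (d.p.rHom B)
      = d.p.rHom (d.s.t A B)
  -- compatibility of ζ with the unitors of ∘ via ∇
  unit_s_left : ∀ A B : V,
    d.zeta d.s.unit A d.s.unit B ≫ d.s.tHom d.nabla (𝟙 (d.p.t A B)) ≫ d.s.lHom (d.p.t A B)
      = d.p.tHom (d.s.lHom A) (d.s.lHom B)
  unit_s_right : ∀ A B : V,
    d.zeta A d.s.unit B d.s.unit ≫ d.s.tHom (𝟙 (d.p.t A B)) d.nabla ≫ d.s.rHom (d.p.t A B)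
      = d.p.tHom (d.s.rHom A) (d.s.rHom B)

/-- The data of a `V`-Freyd category over a monoidal category `M`,
relative to duoidal data `d` on `V`. -/
structure VFreydData {V : Type u₁} [Category.{v₁} V] (d : DuoidalData V)
    (M : Type u₂) [Category.{v₂} M] [MonoidalCategory M] where
  obj : M → M → V
  map : ∀ {a a' b b' : M}, (a' ⟶ a) → (b ⟶ b') → (obj a b ⟶ obj a' b')
  idt : ∀ a : M, d.s.unit ⟶ obj a a
  seq : ∀ a b c : M, d.s.t (obj a b) (obj b c) ⟶ obj a c
  zero : d.p.unit ⟶ obj (𝟙_ M) (𝟙_ M)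
  par : ∀ a₁ b₁ a₂ b₂ : M, d.p.t (obj a₁ b₁) (obj a₂ b₂) ⟶ obj (a₁ ⊗ a₂) (b₁ ⊗ b₂)

/-- The data of a `V`-Freyd category is an actual `V`-Freyd category:
bifunctoriality, (extra)naturality of the structure maps, and the eight axioms. -/
structure IsVFreyd {V : Type u₁} [Category.{v₁} V] {d : DuoidalData V}
    {M : Type u₂} [Category.{v₂} M] [MonoidalCategory M] (C : VFreydData d M) : Prop where
  map_id : ∀ a b : M, C.map (𝟙 a) (𝟙 b) = 𝟙 (C.obj a b)
  map_comp : ∀ {a a' a'' b b' b'' : M} (f : a' ⟶ a) (f' : a'' ⟶ a') (g : b ⟶ b') (g' : b' ⟶ b''),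
    C.map (f' ≫ f) (g ≫ g') = C.map f g ≫ C.map f' g'
  idt_extra : ∀ {a b : M} (f : a ⟶ b),
    C.idt a ≫ C.map (𝟙 a) f = C.idt b ≫ C.map f (𝟙 b)
  seq_nat : ∀ {a a' c c' : M} (f : a' ⟶ a) (g : c ⟶ c') (b : M),
    d.s.tHom (C.map f (𝟙 b)) (C.map (𝟙 b) g) ≫ C.seq a' b c' = C.seq a b c ≫ C.map f g
  seq_extra : ∀ {b b' : M} (f : b ⟶ b') (a c : M),
    d.s.tHom (C.map (𝟙 a) f) (𝟙 (C.obj b' c)) ≫ C.seq a b' c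
      = d.s.tHom (𝟙 (C.obj a b)) (C.map f (𝟙 c)) ≫ C.seq a b c
  par_nat : ∀ {a₁ a₁' b₁ b₁' a₂ a₂' b₂ b₂' : M}
    (f₁ : a₁' ⟶ a₁) (g₁ : b₁ ⟶ b₁') (f₂ : a₂' ⟶ a₂) (g₂ : b₂ ⟶ b₂'),
    d.p.tHom (C.map f₁ g₁) (C.map f₂ g₂) ≫ C.par a₁' b₁' a₂' b₂'
      = C.par a₁ b₁ a₂ b₂ ≫ C.map (f₁ ⊗ₘ f₂) (g₁ ⊗ₘ g₂)
  -- (i) idt is the identity for seq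
  idt_seq : ∀ a b : M,
    d.s.tHom (C.idt a) (𝟙 (C.obj a b)) ≫ C.seq a a b = d.s.lHom (C.obj a b)
  seq_idt : ∀ a b : M,
    d.s.tHom (𝟙 (C.obj a b)) (C.idt b) ≫ C.seq a b b = d.s.rHom (C.obj a b)
  -- (ii) seq is associative
  seq_assoc : ∀ a b c e : M,
    d.s.tHom (C.seq a b c) (𝟙 (C.obj c e)) ≫ C.seq a c e
      = d.s.aHom (C.obj a b) (C.obj b c) (C.obj c e)
          ≫ d.s.tHom (𝟙 (C.obj a b)) (C.seq b c e) ≫ C.seq a b e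
  -- (iii) zero is the identity for par
  zero_par : ∀ a b : M,
    d.p.tHom C.zero (𝟙 (C.obj a b)) ≫ C.par (𝟙_ M) (𝟙_ M) a b
        ≫ C.map (λ_ a).inv (λ_ b).hom
      = d.p.lHom (C.obj a b)
  par_zero : ∀ a b : M,
    d.p.tHom (𝟙 (C.obj a b)) C.zero ≫ C.par a b (𝟙_ M) (𝟙_ M)
        ≫ C.map (ρ_ a).inv (ρ_ b).hom
      = d.p.rHom (C.obj a b)
  -- (iv) par is associative
  par_assoc : ∀ a₁ b₁ a₂ b₂ a₃ b₃ : M,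
    d.p.tHom (C.par a₁ b₁ a₂ b₂) (𝟙 (C.obj a₃ b₃)) ≫ C.par (a₁ ⊗ a₂) (b₁ ⊗ b₂) a₃ b₃
        ≫ C.map (α_ a₁ a₂ a₃).inv (α_ b₁ b₂ b₃).hom
      = d.p.aHom (C.obj a₁ b₁) (C.obj a₂ b₂) (C.obj a₃ b₃)
          ≫ d.p.tHom (𝟙 (C.obj a₁ b₁)) (C.par a₂ b₂ a₃ b₃) ≫ C.par a₁ b₁ (a₂ ⊗ a₃) (b₂ ⊗ b₃)
  -- (v) idt respects zero
  idt_zero : d.eps ≫ C.idt (𝟙_ M) = C.zero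
  -- (vi) idt respects par
  idt_par : ∀ a b : M,
    d.nabla ≫ C.idt (a ⊗ b) = d.p.tHom (C.idt a) (C.idt b) ≫ C.par a a b b
  -- (vii) seq respects zero
  seq_zero : d.delta ≫ d.s.tHom C.zero C.zero ≫ C.seq (𝟙_ M) (𝟙_ M) (𝟙_ M) = C.zero
  -- (viii) seq respects par (exchange)
  exchange : ∀ a₁ b₁ c₁ a₂ b₂ c₂ : M,
    d.zeta (C.obj a₁ b₁) (C.obj b₁ c₁) (C.obj a₂ b₂) (C.obj b₂ c₂)
        ≫ d.s.tHom (C.par a₁ b₁ a₂ b₂) (C.par b₁ c₁ b₂ c₂)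
        ≫ C.seq (a₁ ⊗ a₂) (b₁ ⊗ b₂) (c₁ ⊗ c₂)
      = d.p.tHom (C.seq a₁ b₁ c₁) (C.seq a₂ b₂ c₂) ≫ C.par a₁ c₁ a₂ c₂

/-- The data of a strong monoidal functor. -/
structure StrongMonData (M : Type u₂) (M' : Type u₃) [Category.{v₂} M] [MonoidalCategory M]
    [Category.{v₃} M'] [MonoidalCategory M'] where
  T : M ⥤ M'
  εm : 𝟙_ M' ≅ T.obj (𝟙_ M)
  μm : ∀ a b : M, T.obj a ⊗ T.obj b ≅ T.obj (a ⊗ b)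

/-- The data of a strong monoidal functor is an actual strong monoidal functor. -/
structure IsStrongMon {M : Type u₂} {M' : Type u₃} [Category.{v₂} M] [MonoidalCategory M]
    [Category.{v₃} M'] [MonoidalCategory M'] (F : StrongMonData M M') : Prop where
  μ_nat : ∀ {a a' b b' : M} (f : a ⟶ a') (g : b ⟶ b'),
    (F.T.map f ⊗ₘ F.T.map g) ≫ (F.μm a' b').hom = (F.μm a b).hom ≫ F.T.map (f ⊗ₘ g)
  assoc : ∀ a b c : M,
    ((F.μm a b).hom ▷ F.T.obj c) ≫ (F.μm (a ⊗ b) c).hom ≫ F.T.map (α_ a b c).hom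
      = (α_ (F.T.obj a) (F.T.obj b) (F.T.obj c)).hom ≫ (F.T.obj a ◁ (F.μm b c).hom)
          ≫ (F.μm a (b ⊗ c)).hom
  left_unit : ∀ a : M,
    (F.εm.hom ▷ F.T.obj a) ≫ (F.μm (𝟙_ M) a).hom ≫ F.T.map (λ_ a).hom = (λ_ (F.T.obj a)).hom
  right_unit : ∀ a : M,
    (F.T.obj a ◁ F.εm.hom) ≫ (F.μm a (𝟙_ M)).hom ≫ F.T.map (ρ_ a).hom = (ρ_ (F.T.obj a)).hom

/-- A morphism of `V`-Freyd categories. -/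
structure VFreydHom {V : Type u₁} [Category.{v₁} V] {d : DuoidalData V}
    {M : Type u₂} [Category.{v₂} M] [MonoidalCategory M]
    {M' : Type u₃} [Category.{v₃} M'] [MonoidalCategory M']
    (C : VFreydData d M) (C' : VFreydData d M') where
  F₀ : StrongMonData M M'
  strong : IsStrongMon F₀
  app : ∀ a b : M, C.obj a b ⟶ C'.obj (F₀.T.obj a) (F₀.T.obj b)
  naturality : ∀ {a a' b b' : M} (f : a' ⟶ a) (g : b ⟶ b'),
    C.map f g ≫ app a' b' = app a b ≫ C'.map (F₀.T.map f) (F₀.T.map g)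
  hidt : ∀ a : M, C.idt a ≫ app a a = C'.idt (F₀.T.obj a)
  hseq : ∀ a b c : M,
    C.seq a b c ≫ app a c
      = d.s.tHom (app a b) (app b c) ≫ C'.seq (F₀.T.obj a) (F₀.T.obj b) (F₀.T.obj c)
  hpar : ∀ a₁ b₁ a₂ b₂ : M,
    d.p.tHom (app a₁ b₁) (app a₂ b₂)
        ≫ C'.par (F₀.T.obj a₁) (F₀.T.obj b₁) (F₀.T.obj a₂) (F₀.T.obj b₂)
        ≫ C'.map (𝟙 (F₀.T.obj a₁ ⊗ F₀.T.obj a₂)) (F₀.μm b₁ b₂).hom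
      = C.par a₁ b₁ a₂ b₂ ≫ app (a₁ ⊗ a₂) (b₁ ⊗ b₂) ≫ C'.map (F₀.μm a₁ a₂).hom
          (𝟙 (F₀.T.obj (b₁ ⊗ b₂)))

/-- A separated monoid: a monoid together with a separation relation `∥`. -/
structure SepMon (M : Type w) where
  mul : M → M → M
  e : M
  sep : M → M → Prop
  mul_assoc : ∀ x y z, mul (mul x y) z = mul x (mul y z)
  e_mul : ∀ x, mul e x = x
  mul_e : ∀ x, mul x e = x
  sep_e_left : ∀ m, sep e m
  sep_e_right : ∀ m, sep m e
  sep_mul_left : ∀ m m' n, sep (mul m m') n ↔ sep m n ∧ sep m' n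
  sep_mul_right : ∀ m n n', sep m (mul n n') ↔ sep m n ∧ sep m n'

/-- An object of the category of `M`-labelled sets: a set with a labelling into `M`. -/
structure LabObj (M : Type w) : Type (max w (u + 1)) where
  carrier : Type u
  label : carrier → M

/-- A morphism of labelled sets: a label-preserving function. -/
@[ext]
structure LabHom {M : Type w} (X Y : LabObj.{w, u} M) where
  toFun : X.carrier → Y.carrier
  lbl : ∀ a, Y.label (toFun a) = X.label a

instance {M : Type w} : Category (LabObj.{w, u} M) where
  Hom := LabHom
  id X := ⟨id, fun _ => rfl⟩
  comp f g := ⟨fun a => g.toFun (f.toFun a), fun a => (g.lbl _).trans (f.lbl a)⟩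

variable {M : Type w}

/-- The monoidal structure `•` on `M`-labelled sets. -/
def labMul (S : SepMon M) : MonStrData (LabObj.{w, u} M) where
  t X Y := ⟨X.carrier × Y.carrier, fun p => S.mul (X.label p.1) (Y.label p.2)⟩
  tHom f g := ⟨fun p => (f.toFun p.1, g.toFun p.2),
    fun p => by simp [f.lbl, g.lbl]⟩
  unit := ⟨PUnit, fun _ => S.e⟩
  aHom X Y Z := ⟨fun p => (p.1.1, (p.1.2, p.2)), fun _ => (S.mul_assoc _ _ _).symm⟩
  aInv X Y Z := ⟨fun p => ((p.1, p.2.1), p.2.2), fun _ => S.mul_assoc _ _ _⟩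
  lHom X := ⟨fun p => p.2, fun _ => (S.e_mul _).symm⟩
  lInv X := ⟨fun x => (PUnit.unit, x), fun _ => S.e_mul _⟩
  rHom X := ⟨fun p => p.1, fun _ => (S.mul_e _).symm⟩
  rInv X := ⟨fun x => (x, PUnit.unit), fun _ => S.mul_e _⟩

/-- The monoidal structure `∥` on `M`-labelled sets: the restriction of `•` to
separated pairs. -/
def labSep (S : SepMon M) : MonStrData (LabObj.{w, u} M) where
  t X Y := ⟨{p : X.carrier × Y.carrier // S.sep (X.label p.1) (Y.label p.2)},
    fun p => S.mul (X.label p.val.1) (Y.label p.val.2)⟩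
  tHom f g := ⟨fun p => ⟨(f.toFun p.val.1, g.toFun p.val.2), by
      rw [f.lbl, g.lbl]; exact p.property⟩,
    fun p => by simp [f.lbl, g.lbl]⟩
  unit := ⟨PUnit, fun _ => S.e⟩
  aHom X Y Z := ⟨fun p => ⟨(p.val.1.val.1, ⟨(p.val.1.val.2, p.val.2),
      ((S.sep_mul_left _ _ _).mp p.property).2⟩), by
      exact (S.sep_mul_right _ _ _).mpr
        ⟨p.val.1.property, ((S.sep_mul_left _ _ _).mp p.property).1⟩⟩,
    fun _ => (S.mul_assoc _ _ _).symm⟩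
  aInv X Y Z := ⟨fun p => ⟨(⟨(p.val.1, p.val.2.val.1),
      ((S.sep_mul_right _ _ _).mp p.property).1⟩, p.val.2.val.2), by
      exact (S.sep_mul_left _ _ _).mpr
        ⟨((S.sep_mul_right _ _ _).mp p.property).2, p.val.2.property⟩⟩,
    fun _ => S.mul_assoc _ _ _⟩
  lHom X := ⟨fun p => p.val.2, fun _ => (S.e_mul _).symm⟩
  lInv X := ⟨fun x => ⟨(PUnit.unit, x), S.sep_e_left _⟩, fun _ => S.e_mul _⟩
  rHom X := ⟨fun p => p.val.1, fun _ => (S.mul_e _).symm⟩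
  rInv X := ⟨fun x => ⟨(x, PUnit.unit), S.sep_e_right _⟩, fun _ => S.mul_e _⟩

/-- The underlying function of the interchange `ζ` for labelled sets: the restricted
middle-four interchange. -/
def labZetaFun (S : SepMon M) (A B C D : LabObj.{w, u} M) :
    ((labSep S).t ((labMul S).t A B) ((labMul S).t C D)).carrier →
      ((labMul S).t ((labSep S).t A C) ((labSep S).t B D)).carrier :=
  fun p =>
    (⟨(p.val.1.1, p.val.2.1),
        ((S.sep_mul_right _ _ _).mp ((S.sep_mul_left _ _ _).mp p.property).1).1⟩,
     ⟨(p.val.1.2, p.val.2.2),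
        ((S.sep_mul_right _ _ _).mp ((S.sep_mul_left _ _ _).mp p.property).2).2⟩)

theorem SepMon.m4 (S : SepMon M) (hc : ∀ x y, S.mul x y = S.mul y x) (x y z w : M) :
    S.mul (S.mul x z) (S.mul y w) = S.mul (S.mul x y) (S.mul z w) := by
  rw [S.mul_assoc x y, ← S.mul_assoc y z w, hc y z, S.mul_assoc z y w, ← S.mul_assoc x z]

/-- The duoidal data `(Label_M, ∥, cst_e, •, cst_e)` on `M`-labelled sets over a
commutative separated monoid, with `ζ` the restricted middle-four interchange. -/
def labelDuoC (S : SepMon M) (hc : ∀ x y, S.mul x y = S.mul y x) :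
    DuoidalData (LabObj.{w, u} M) where
  p := labSep S
  s := labMul S
  zeta A B C D := ⟨labZetaFun S A B C D, fun _ => S.m4 hc _ _ _ _⟩
  delta := ⟨fun _ => (PUnit.unit, PUnit.unit), fun _ => S.e_mul _⟩
  nabla := ⟨fun _ => PUnit.unit, fun _ => (S.e_mul _).symm⟩
  eps := ⟨fun _ => PUnit.unit, fun _ => rfl⟩

/-- Finite sets of resources: the separated monoid `(P_f(R), ∪, ∅)` with
`P ∥ Q` iff `P ∩ Q = ∅`. -/
def finsetSep : SepMon (Finset ℕ) where
  mul P Q := P ∪ Q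
  e := ∅
  sep P Q := P ∩ Q = ∅
  mul_assoc := Finset.union_assoc
  e_mul := Finset.empty_union
  mul_e := Finset.union_empty
  sep_e_left m := Finset.empty_inter m
  sep_e_right m := Finset.inter_empty m
  sep_mul_left m m' n := by
    simp [Finset.union_inter_distrib_right, Finset.union_eq_empty]
  sep_mul_right m n n' := by
    simp [Finset.inter_union_distrib_left, Finset.union_eq_empty]

theorem finsetSep_comm (P Q : Finset ℕ) : finsetSep.mul P Q = finsetSep.mul Q P :=
  Finset.union_comm P Q

/-- The duoidal category `Label_{P_f(R)}`. -/
def finsetLabelDuo : DuoidalData (LabObj.{0, u} (Finset ℕ)) :=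
  labelDuoC finsetSep finsetSep_comm

variable (R : ℕ → Type u)

/-- The product `Π_Q` of the resources in the finite set `Q`. -/
def PiQ (Q : Finset ℕ) : Type u := ∀ i ∈ Q, R i

/-- Extension `h^Q_P` of a stateful map along `P ⊆ Q`, leaving the extra resources
unchanged. -/
def extendFun {a b : Type u} {P Q : Finset ℕ} (h : P ⊆ Q)
    (k : a × PiQ R P → b × PiQ R P) : a × PiQ R Q → b × PiQ R Q := fun p =>
  ((k (p.1, fun i hi => p.2 i (h hi))).1,
   fun i hi => if hP : i ∈ P then (k (p.1, fun j hj => p.2 j (h hj))).2 i hP else p.2 i hi)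

/-- Parallel composition of stateful maps on (disjoint) resource sets, up to
rearranging state. -/
def parFun {a₁ b₁ a₂ b₂ : Type u} {Q Q' : Finset ℕ}
    (f : a₁ × PiQ R Q → b₁ × PiQ R Q) (g : a₂ × PiQ R Q' → b₂ × PiQ R Q') :
    (a₁ × a₂) × PiQ R (Q ∪ Q') → (b₁ × b₂) × PiQ R (Q ∪ Q') := fun p =>
  (((f (p.1.1, fun i hi => p.2 i (Finset.subset_union_left hi))).1,
    (g (p.1.2, fun i hi => p.2 i (Finset.subset_union_right hi))).1),
   fun i hi =>
    if h : i ∈ Q then (f (p.1.1, fun j hj => p.2 j (Finset.subset_union_left hj))).2 i h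
    else (g (p.1.2, fun j hj => p.2 j (Finset.subset_union_right hj))).2 i
      ((Finset.mem_union.mp hi).resolve_left h))

/-- The `Label_{P_f(R)}`-Freyd category of stateful functions: a morphism from `a` to
`b` labelled by `Q` is a function `a × Π_Q → b × Π_Q`. -/
def stateC : VFreydData (finsetLabelDuo.{u}) (Type u) where
  obj a b := ⟨Σ Q : Finset ℕ, (a × PiQ R Q → b × PiQ R Q), Sigma.fst⟩
  map f g := ⟨fun k => ⟨k.1, fun p => ((g (k.2 (f p.1, p.2)).1), (k.2 (f p.1, p.2)).2)⟩,
    fun _ => rfl⟩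
  idt a := ⟨fun _ => ⟨∅, id⟩, fun _ => rfl⟩
  seq a b c := ⟨fun pq => ⟨pq.1.1 ∪ pq.2.1,
      fun x => extendFun R Finset.subset_union_right pq.2.2
        (extendFun R Finset.subset_union_left pq.1.2 x)⟩,
    fun _ => rfl⟩
  zero := ⟨fun _ => ⟨∅, id⟩, fun _ => rfl⟩
  par a₁ b₁ a₂ b₂ := ⟨fun p => ⟨p.val.1.1 ∪ p.val.2.1, parFun R p.val.1.2 p.val.2.2⟩,
    fun _ => rfl⟩

lemma sigCast {a b : Type u} {Q Q' : Finset ℕ} (h : Q = Q')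
    (f : a × PiQ R Q → b × PiQ R Q) :
    (⟨Q, f⟩ : Σ Q, (a × PiQ R Q → b × PiQ R Q)) =
      ⟨Q', fun p => ((f (p.1, fun i hi => p.2 i (h ▸ hi))).1,
        fun i hi => (f (p.1, fun j hj => p.2 j (h ▸ hj))).2 i (h ▸ hi))⟩ := by
  subst h; rfl

lemma extend_trans {a b : Type u} {P Q S : Finset ℕ} (h1 : P ⊆ Q) (h2 : Q ⊆ S)
    (f : a × PiQ R P → b × PiQ R P) :
    extendFun R h2 (extendFun R h1 f) = extendFun R (h1.trans h2) f := by
  funext x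
  refine Prod.ext rfl ?_
  funext i hi
  simp only [extendFun]
  split_ifs with hQ hP hP <;> first | rfl | exact absurd (h1 hP) hQ

lemma restrict_extend {a b : Type u} {P Q : Finset ℕ} (h : P ⊆ Q)
    (f : a × PiQ R P → b × PiQ R P) (x : a × PiQ R Q) :
    (fun i (hi : i ∈ P) => (extendFun R h f x).2 i (h hi))
      = (f (x.1, fun i hi => x.2 i (h hi))).2 := by
  funext i hi
  simp only [extendFun]
  rw [dif_pos hi]

lemma extend_comp {a b c : Type u} {P Q : Finset ℕ} (h : P ⊆ Q)
    (f : a × PiQ R P → b × PiQ R P) (g : b × PiQ R P → c × PiQ R P) :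
    extendFun R h (fun y => g (f y)) = fun x => extendFun R h g (extendFun R h f x) := by
  funext x
  have key : extendFun R h g (extendFun R h f x)
      = extendFun R h g ((f (x.1, fun i hi => x.2 i (h hi))).1,
          (extendFun R h f x).2) := rfl
  rw [key]
  have key2 : ((f (x.1, fun i hi => x.2 i (h hi))).1,
        fun i (hi : i ∈ P) => (extendFun R h f x).2 i (h hi))
      = f (x.1, fun i hi => x.2 i (h hi)) := by
    rw [restrict_extend R h f x]
    rfl
  show extendFun R h (fun y => g (f y)) x
    = ((g ((f (x.1, fun i hi => x.2 i (h hi))).1,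
        fun i hi => (extendFun R h f x).2 i (h hi))).1,
       fun i hi => if hP : i ∈ P then
        (g ((f (x.1, fun j hj => x.2 j (h hj))).1,
          fun j hj => (extendFun R h f x).2 j (h hj))).2 i hP
        else (extendFun R h f x).2 i hi)
  erw [key2]
  refine Prod.ext rfl ?_
  funext i hi
  simp only [extendFun]
  split_ifs with hP
  · rfl
  · rfl

/-- chain of three extends, recast along an equality of ambient sets -/
lemma chain3 {a b c e : Type u} {P Q S T T' : Finset ℕ} (h : T = T')
    (hP : P ⊆ T) (hQ : Q ⊆ T) (hS : S ⊆ T) (hP' : P ⊆ T') (hQ' : Q ⊆ T') (hS' : S ⊆ T')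
    (u : a × PiQ R P → b × PiQ R P) (v : b × PiQ R Q → c × PiQ R Q)
    (w : c × PiQ R S → e × PiQ R S) :
    (⟨T, fun x => extendFun R hS w (extendFun R hQ v (extendFun R hP u x))⟩
      : Σ Q, (a × PiQ R Q → e × PiQ R Q))
    = ⟨T', fun x => extendFun R hS' w (extendFun R hQ' v (extendFun R hP' u x))⟩ := by
  subst h; rfl

lemma chain2 {a b c : Type u} {A B T T' : Finset ℕ} (h : T = T')
    (hA : A ⊆ T) (hB : B ⊆ T) (hA' : A ⊆ T') (hB' : B ⊆ T')
    (f : a × PiQ R A → b × PiQ R A) (g : b × PiQ R B → c × PiQ R B) :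
    (⟨T, fun x => extendFun R hB g (extendFun R hA f x)⟩
      : Σ Q, (a × PiQ R Q → c × PiQ R Q))
    = ⟨T', fun x => extendFun R hB' g (extendFun R hA' f x)⟩ := by
  subst h; rfl

lemma extend_par {a₁ b₁ a₂ b₂ : Type u} {S₁ S₂ A B : Finset ℕ} (hd : A ∩ B = ∅)
    (h₁ : S₁ ⊆ A) (h₂ : S₂ ⊆ B) (h : S₁ ∪ S₂ ⊆ A ∪ B)
    (u₁ : a₁ × PiQ R S₁ → b₁ × PiQ R S₁) (u₂ : a₂ × PiQ R S₂ → b₂ × PiQ R S₂) :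
    extendFun R h (parFun R u₁ u₂)
      = parFun R (extendFun R h₁ u₁) (extendFun R h₂ u₂) := by
  have hAB : ∀ i, i ∈ A → i ∈ B → False := fun i h1 h2 => by
    have : i ∈ A ∩ B := Finset.mem_inter.mpr ⟨h1, h2⟩
    rw [hd] at this
    exact absurd this (Finset.notMem_empty i)
  funext x
  refine Prod.ext rfl ?_
  funext i hi
  simp only [extendFun, parFun]
  by_cases hS1 : i ∈ S₁
  · rw [dif_pos (Finset.mem_union_left _ hS1), dif_pos hS1,
      dif_pos (h₁ hS1), dif_pos hS1]
  · by_cases hS2 : i ∈ S₂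
    · rw [dif_pos (Finset.mem_union_right _ hS2), dif_neg hS1,
        dif_neg (fun hA' => hAB i hA' (h₂ hS2)), dif_pos hS2]
    · rw [dif_neg (fun hm => (Finset.mem_union.mp hm).elim hS1 hS2)]
      by_cases hA' : i ∈ A
      · rw [dif_pos hA', dif_neg hS1]
      · rw [dif_neg hA', dif_neg hS2]

lemma parFun_comp {a₁ b₁ c₁ a₂ b₂ c₂ : Type u} {A B : Finset ℕ} (hd : A ∩ B = ∅)
    (f₁ : a₁ × PiQ R A → b₁ × PiQ R A) (g₁ : b₁ × PiQ R A → c₁ × PiQ R A)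
    (f₂ : a₂ × PiQ R B → b₂ × PiQ R B) (g₂ : b₂ × PiQ R B → c₂ × PiQ R B) :
    parFun R (fun y => g₁ (f₁ y)) (fun y => g₂ (f₂ y))
      = fun x => parFun R g₁ g₂ (parFun R f₁ f₂ x) := by
  have hAB : ∀ i, i ∈ A → i ∈ B → False := fun i h1 h2 => by
    have : i ∈ A ∩ B := Finset.mem_inter.mpr ⟨h1, h2⟩
    rw [hd] at this
    exact absurd this (Finset.notMem_empty i)
  funext x
  have k1 : (fun i (hi : i ∈ A) => (parFun R f₁ f₂ x).2 i (Finset.mem_union_left _ hi))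
      = (f₁ (x.1.1, fun i hi => x.2 i (Finset.mem_union_left _ hi))).2 := by
    funext i hi
    simp only [parFun]
    rw [dif_pos hi]
  have k2 : (fun i (hi : i ∈ B) => (parFun R f₁ f₂ x).2 i (Finset.mem_union_right _ hi))
      = (f₂ (x.1.2, fun i hi => x.2 i (Finset.mem_union_right _ hi))).2 := by
    funext i hi
    simp only [parFun]
    rw [dif_neg (fun hA' => hAB i hA' hi)]
  show _ = ((((g₁ ((parFun R f₁ f₂ x).1.1, fun i hi => (parFun R f₁ f₂ x).2 i
        (Finset.mem_union_left _ hi))).1,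
      (g₂ ((parFun R f₁ f₂ x).1.2, fun i hi => (parFun R f₁ f₂ x).2 i
        (Finset.mem_union_right _ hi))).1)),
     fun i hi => if h : i ∈ A then
        (g₁ ((parFun R f₁ f₂ x).1.1, fun j hj => (parFun R f₁ f₂ x).2 j
          (Finset.mem_union_left _ hj))).2 i h
      else (g₂ ((parFun R f₁ f₂ x).1.2, fun j hj => (parFun R f₁ f₂ x).2 j
          (Finset.mem_union_right _ hj))).2 i ((Finset.mem_union.mp hi).resolve_left h))
  rw [k1, k2]
  refine Prod.ext rfl ?_
  funext i hi
  simp only [parFun]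

set_option maxHeartbeats 2000000 in
/-- The stateful functions on resources, with `idt(⋆) = (∅, id)`,
`zero(⋆) = (∅, id)`, `seq((P,f),(Q,g)) = (P ∪ Q, g^{P∪Q}_Q ∘ f^{P∪Q}_P)` and
`par((Q,f),(Q',f'))` given for disjoint `Q, Q'` by parallel composition up to
rearranging state, form a `Label_{P_f(R)}`-Freyd category over `(Set, ×, 1)`. -/
theorem stateC_is_vfreyd (R : ℕ → Type u) : IsVFreyd (stateC R) := by
  constructor
  case map_id => intro a b; rfl
  case map_comp => intro a a' a'' b b' b'' f f' g g'; rfl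
  case idt_extra => intro a b f; rfl
  case seq_nat => intro a a' c c' f g b; rfl
  case seq_extra => intro b b' f a c; rfl
  case par_nat => intro a₁ a₁' b₁ b₁' a₂ a₂' b₂ b₂' f₁ g₁ f₂ g₂; rfl
  case idt_seq =>
    intro a b
    apply LabHom.ext
    funext p
    obtain ⟨u, Q, v⟩ := p
    show (⟨∅ ∪ Q, fun x => extendFun R Finset.subset_union_right v
        (extendFun R Finset.subset_union_left id x)⟩
      : Σ Q, (a × PiQ R Q → b × PiQ R Q)) = ⟨Q, v⟩
    rw [sigCast R (Finset.empty_union Q)]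
    refine congrArg (Sigma.mk Q) ?_
    funext p
    refine Prod.ext ?_ ?_
    · simp [extendFun]
    · funext i hi
      simp [extendFun, hi]
  case seq_idt =>
    intro a b
    apply LabHom.ext
    funext p
    obtain ⟨⟨Q, v⟩, u⟩ := p
    show (⟨Q ∪ ∅, fun x => extendFun R Finset.subset_union_right id
        (extendFun R Finset.subset_union_left v x)⟩
      : Σ Q, (a × PiQ R Q → b × PiQ R Q)) = ⟨Q, v⟩
    rw [sigCast R (Finset.union_empty Q)]
    refine congrArg (Sigma.mk Q) ?_
    funext p
    refine Prod.ext ?_ ?_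
    · simp [extendFun]
    · funext i hi
      simp [extendFun, hi]
  case seq_assoc =>
    intro a b c e
    apply LabHom.ext
    funext p
    obtain ⟨⟨⟨P, u⟩, ⟨Q, v⟩⟩, ⟨S, w⟩⟩ := p
    simp only [CategoryStruct.comp, CategoryStruct.id, stateC, finsetLabelDuo, labelDuoC,
      labMul, id_eq]
    refine Eq.trans (congrArg (Sigma.mk (P ∪ Q ∪ S)) ?_)
      (Eq.trans (chain3 R (Finset.union_assoc P Q S)
        (Finset.subset_union_left.trans Finset.subset_union_left)
        (Finset.subset_union_right.trans Finset.subset_union_left)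
        Finset.subset_union_right
        Finset.subset_union_left
        (Finset.subset_union_left.trans Finset.subset_union_right)
        (Finset.subset_union_right.trans Finset.subset_union_right) u v w)
        (congrArg (Sigma.mk (P ∪ (Q ∪ S))) ?_))
    · funext x
      rw [extend_comp R Finset.subset_union_left (extendFun R Finset.subset_union_left u)
          (extendFun R Finset.subset_union_right v),
        extend_trans R Finset.subset_union_left Finset.subset_union_left u,
        extend_trans R Finset.subset_union_right Finset.subset_union_left v]
    · funext x
      rw [extend_comp R Finset.subset_union_right (extendFun R Finset.subset_union_left v)
          (extendFun R Finset.subset_union_right w),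
        extend_trans R Finset.subset_union_left Finset.subset_union_right v,
        extend_trans R Finset.subset_union_right Finset.subset_union_right w]
  case zero_par =>
    intro a b
    apply LabHom.ext
    funext p
    obtain ⟨⟨pu, ⟨Q, v⟩⟩, hsep⟩ := p
    simp only [CategoryStruct.comp, CategoryStruct.id, stateC, finsetLabelDuo, labelDuoC,
      labMul, labSep, id_eq]
    rw [sigCast R (Finset.empty_union Q)]
    refine congrArg (Sigma.mk Q) ?_
    funext p
    refine Prod.ext ?_ ?_
    · rfl
    · funext i hi
      rfl
  case par_zero =>
    intro a b
    apply LabHom.ext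
    funext p
    obtain ⟨⟨⟨Q, v⟩, pu⟩, hsep⟩ := p
    simp only [CategoryStruct.comp, CategoryStruct.id, stateC, finsetLabelDuo, labelDuoC,
      labMul, labSep, id_eq]
    rw [sigCast R (Finset.union_empty Q)]
    refine congrArg (Sigma.mk Q) ?_
    funext p
    refine Prod.ext ?_ ?_
    · rfl
    · funext i hi
      simp [parFun, hi]
      rfl
  case par_assoc =>
    intro a₁ b₁ a₂ b₂ a₃ b₃
    apply LabHom.ext
    funext p
    obtain ⟨⟨⟨⟨⟨Q₁, f₁⟩, ⟨Q₂, f₂⟩⟩, h12⟩, ⟨Q₃, f₃⟩⟩, hsep⟩ := p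
    simp only [CategoryStruct.comp, CategoryStruct.id, stateC, finsetLabelDuo, labelDuoC,
      labMul, labSep, id_eq]
    rw [sigCast R (Finset.union_assoc Q₁ Q₂ Q₃)]
    refine congrArg (Sigma.mk (Q₁ ∪ (Q₂ ∪ Q₃))) ?_
    funext p
    refine Prod.ext ?_ ?_
    · rfl
    · funext i hi
      simp only [parFun]
      by_cases h1 : i ∈ Q₁
      · rw [dif_pos (Finset.mem_union_left _ h1), dif_pos h1, dif_pos h1]
        rfl
      · by_cases h2 : i ∈ Q₂
        · rw [dif_pos (Finset.mem_union_right _ h2), dif_neg h1, dif_neg h1,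
            dif_pos h2]
          rfl
        · rw [dif_neg (fun hm => (Finset.mem_union.mp hm).elim h1 h2), dif_neg h1,
            dif_neg h2]
          rfl
  case idt_zero => rfl
  case idt_par =>
    intro a b
    apply LabHom.ext
    funext p
    obtain ⟨⟨pu, pu'⟩, hsep⟩ := p
    simp only [CategoryStruct.comp, CategoryStruct.id, stateC, finsetLabelDuo, labelDuoC,
      labMul, labSep, id_eq]
    refine Eq.symm ?_
    rw [sigCast R (Finset.union_empty (∅ : Finset ℕ))]
    refine congrArg (Sigma.mk (∅ : Finset ℕ)) ?_
    funext p
    refine Prod.ext ?_ ?_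
    · simp [parFun]
    · funext i hi
      simp [parFun, hi]
  case seq_zero =>
    apply LabHom.ext
    funext p
    show (⟨(∅ : Finset ℕ) ∪ ∅, fun x => extendFun R Finset.subset_union_right id
        (extendFun R Finset.subset_union_left id x)⟩
      : Σ Q, ((𝟙_ (Type u)) × PiQ R Q → (𝟙_ (Type u)) × PiQ R Q)) = ⟨∅, id⟩
    rw [sigCast R (Finset.union_empty (∅ : Finset ℕ))]
    refine congrArg (Sigma.mk (∅ : Finset ℕ)) ?_
    funext p
    refine Prod.ext ?_ ?_
    · simp [extendFun]
    · funext i hi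
      simp [extendFun, hi]
  case exchange =>
    intro a₁ b₁ c₁ a₂ b₂ c₂
    apply LabHom.ext
    funext p
    obtain ⟨⟨⟨⟨P₁, u₁⟩, ⟨Q₁, v₁⟩⟩, ⟨⟨P₂, u₂⟩, ⟨Q₂, v₂⟩⟩⟩, hsep⟩ := p
    simp only [CategoryStruct.comp, CategoryStruct.id, stateC, finsetLabelDuo, labelDuoC,
      labMul, labSep, labZetaFun, id_eq]
    have hd : (P₁ ∪ Q₁) ∩ (P₂ ∪ Q₂) = ∅ := hsep
    have hT : P₁ ∪ P₂ ∪ (Q₁ ∪ Q₂) = P₁ ∪ Q₁ ∪ (P₂ ∪ Q₂) := by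
      ext i
      simp only [Finset.mem_union]
      tauto
    rw [parFun_comp R hd,
      ← extend_par R hd Finset.subset_union_left Finset.subset_union_left
        (Finset.union_subset (Finset.subset_union_left.trans Finset.subset_union_left)
          (Finset.subset_union_left.trans Finset.subset_union_right)) u₁ u₂,
      ← extend_par R hd Finset.subset_union_right Finset.subset_union_right
        (Finset.union_subset (Finset.subset_union_right.trans Finset.subset_union_left)
          (Finset.subset_union_right.trans Finset.subset_union_right)) v₁ v₂]
    exact chain2 R hT _ _ _ _ _ _
end

section
/- Let C : M^op × M → Subset be a Subset-Freyd category over a monoidal category (M, ⊕, e). Then every distinguished morphism g ∈⁺ C(a', b') is central: for every f ∈ C(a,b), writing a ⋊ g := par(idt(⋆), g), f ⋉ b' := par(f, idt(⋆)), f ⋉ a' := par(f, idt(⋆)) and b ⋊ g := par(idt(⋆), g), one has seq(a ⋊ g, f ⋉ b') = par(f, g) = seq(f ⋉ a', b ⋊ g), and symmetrically, with g placed on the left, seq(g ⋉ a, b' ⋊ f) = par(g, f) = seq(a' ⋊ f, g ⋉ b). -/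
set_option linter.unusedVariables false
open CategoryTheory CategoryTheory.Limits MonoidalCategory

universe w v u v₁ u₁ v₂ u₂ v₃ u₃

/-- An object of the category `Subset`: a set with a distinguished subset. -/
structure SubObj : Type (u + 1) where
  carrier : Type u
  dist : Set carrier

/-- A morphism of `Subset`: a function preserving the distinguished subsets. -/
@[ext]
structure SubHom (X Y : SubObj.{u}) where
  toFun : X.carrier → Y.carrier
  maps : ∀ a ∈ X.dist, toFun a ∈ Y.dist

instance : Category SubObj.{u} where
  Hom := SubHom
  id X := ⟨id, fun a ha => ha⟩
  comp f g := ⟨fun a => g.toFun (f.toFun a), fun a ha => g.maps _ (f.maps a ha)⟩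

/-- The cartesian product monoidal structure on `Subset`. -/
def cartSub : MonStrData SubObj.{u} where
  t X Y := ⟨X.carrier × Y.carrier, {p | p.1 ∈ X.dist ∧ p.2 ∈ Y.dist}⟩
  tHom f g := ⟨fun p => (f.toFun p.1, g.toFun p.2),
    fun p hp => ⟨f.maps _ hp.1, g.maps _ hp.2⟩⟩
  unit := ⟨PUnit, Set.univ⟩
  aHom X Y Z := ⟨fun p => (p.1.1, (p.1.2, p.2)), fun p hp => ⟨hp.1.1, hp.1.2, hp.2⟩⟩
  aInv X Y Z := ⟨fun p => ((p.1, p.2.1), p.2.2), fun p hp => ⟨⟨hp.1, hp.2.1⟩, hp.2.2⟩⟩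
  lHom X := ⟨fun p => p.2, fun p hp => hp.2⟩
  lInv X := ⟨fun x => (PUnit.unit, x), fun x hx => ⟨trivial, hx⟩⟩
  rHom X := ⟨fun p => p.1, fun p hp => hp.1⟩
  rInv X := ⟨fun x => (x, PUnit.unit), fun x hx => ⟨hx, trivial⟩⟩

/-- The disjunctive product monoidal structure on `Subset`:
`(X, A) ⊗ (Y, B) = (X × Y, (A × Y) ∪ (X × B))`. -/
def disjSub : MonStrData SubObj.{u} where
  t X Y := ⟨{p : X.carrier × Y.carrier // p.1 ∈ X.dist ∨ p.2 ∈ Y.dist},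
    {p | p.val.1 ∈ X.dist ∧ p.val.2 ∈ Y.dist}⟩
  tHom f g := ⟨fun p => ⟨(f.toFun p.val.1, g.toFun p.val.2),
      p.property.imp (f.maps _) (g.maps _)⟩,
    fun p hp => ⟨f.maps _ hp.1, g.maps _ hp.2⟩⟩
  unit := ⟨PUnit, Set.univ⟩
  aHom X Y Z := ⟨fun p => ⟨(p.val.1.val.1, ⟨(p.val.1.val.2, p.val.2),
      p.property.elim (fun h => Or.inl h.2) Or.inr⟩),
      p.property.elim (fun h => Or.inl h.1)
        (fun hz => p.val.1.property.imp id (fun hy => ⟨hy, hz⟩))⟩,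
    fun p hp => ⟨hp.1.1, hp.1.2, hp.2⟩⟩
  aInv X Y Z := ⟨fun p => ⟨(⟨(p.val.1, p.val.2.val.1),
      p.property.elim Or.inl (fun h => Or.inr h.1)⟩, p.val.2.val.2),
      p.property.elim (fun hx => p.val.2.property.elim (fun hy => Or.inl ⟨hx, hy⟩) Or.inr)
        (fun h => Or.inr h.2)⟩,
    fun p hp => ⟨⟨hp.1, hp.2.1⟩, hp.2.2⟩⟩
  lHom X := ⟨fun p => p.val.2, fun p hp => hp.2⟩
  lInv X := ⟨fun x => ⟨(PUnit.unit, x), Or.inl trivial⟩, fun x hx => ⟨trivial, hx⟩⟩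
  rHom X := ⟨fun p => p.val.1, fun p hp => hp.1⟩
  rInv X := ⟨fun x => ⟨(x, PUnit.unit), Or.inr trivial⟩, fun x hx => ⟨hx, trivial⟩⟩

/-- The duoidal data `(Subset, ⊗, (1,1), ×, (1,1))` on the category of distinguished
subsets, with `ζ` the restricted middle-four interchange, `Δ` and `∇` unitors, and `ε`
the identity. -/
def subsetDuo : DuoidalData SubObj.{u} where
  p := disjSub
  s := cartSub
  zeta A B C D := ⟨fun p =>
      (⟨(p.val.1.1, p.val.2.1), p.property.imp And.left And.left⟩,
       ⟨(p.val.1.2, p.val.2.2), p.property.imp And.right And.right⟩),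
    fun p hp => ⟨⟨hp.1.1, hp.2.1⟩, hp.1.2, hp.2.2⟩⟩
  delta := ⟨fun _ => (PUnit.unit, PUnit.unit), fun _ _ => ⟨trivial, trivial⟩⟩
  nabla := ⟨fun _ => PUnit.unit, fun _ _ => trivial⟩
  eps := ⟨fun _ => PUnit.unit, fun _ _ => trivial⟩

theorem subApply {X Y : SubObj.{u}} {f g : X ⟶ Y} (h : f = g) (x : X.carrier) :
    f.toFun x = g.toFun x := congrArg (fun k => SubHom.toFun k x) h

/-- In a `Subset`-Freyd category, every distinguished morphism `g ∈⁺ C(a',b')` is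
central: writing `a ⋊ g = par(idt(⋆), g)` and `f ⋉ b' = par(f, idt(⋆))`, one has
`seq(a ⋊ g, f ⋉ b') = par(f, g) = seq(f ⋉ a', b ⋊ g)` for every `f ∈ C(a,b)`, and
symmetrically with `g` placed on the left. -/
theorem distinguished_is_central {M : Type u₂} [Category.{v₂} M] [MonoidalCategory M]
    (C : VFreydData subsetDuo.{u} M) (hC : IsVFreyd C)
    {a b a' b' : M} (g : (C.obj a' b').carrier) (hg : g ∈ (C.obj a' b').dist)
    (f : (C.obj a b).carrier) :
    (SubHom.toFun (C.seq (a ⊗ a') (a ⊗ b') (b ⊗ b'))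
        (SubHom.toFun (C.par a a a' b')
          ⟨(SubHom.toFun (C.idt a) PUnit.unit, g), Or.inr hg⟩,
         SubHom.toFun (C.par a b b' b')
          ⟨(f, SubHom.toFun (C.idt b') PUnit.unit),
            Or.inr ((C.idt b').maps PUnit.unit trivial)⟩)
      = SubHom.toFun (C.par a b a' b') ⟨(f, g), Or.inr hg⟩)
    ∧
    (SubHom.toFun (C.seq (a ⊗ a') (b ⊗ a') (b ⊗ b'))
        (SubHom.toFun (C.par a b a' a')
          ⟨(f, SubHom.toFun (C.idt a') PUnit.unit),
            Or.inr ((C.idt a').maps PUnit.unit trivial)⟩,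
         SubHom.toFun (C.par b b a' b')
          ⟨(SubHom.toFun (C.idt b) PUnit.unit, g), Or.inr hg⟩)
      = SubHom.toFun (C.par a b a' b') ⟨(f, g), Or.inr hg⟩)
    ∧
    (SubHom.toFun (C.seq (a' ⊗ a) (b' ⊗ a) (b' ⊗ b))
        (SubHom.toFun (C.par a' b' a a)
          ⟨(g, SubHom.toFun (C.idt a) PUnit.unit), Or.inl hg⟩,
         SubHom.toFun (C.par b' b' a b)
          ⟨(SubHom.toFun (C.idt b') PUnit.unit, f),
            Or.inl ((C.idt b').maps PUnit.unit trivial)⟩)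
      = SubHom.toFun (C.par a' b' a b) ⟨(g, f), Or.inl hg⟩)
    ∧
    (SubHom.toFun (C.seq (a' ⊗ a) (a' ⊗ b) (b' ⊗ b))
        (SubHom.toFun (C.par a' a' a b)
          ⟨(SubHom.toFun (C.idt a') PUnit.unit, f),
            Or.inl ((C.idt a').maps PUnit.unit trivial)⟩,
         SubHom.toFun (C.par a' b' b b)
          ⟨(g, SubHom.toFun (C.idt b) PUnit.unit), Or.inl hg⟩)
      = SubHom.toFun (C.par a' b' a b) ⟨(g, f), Or.inl hg⟩) := by
  refine ⟨?_, ?_, ?_, ?_⟩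
  · have E := subApply (hC.exchange a a b a' b' b')
      ⟨((SubHom.toFun (C.idt a) PUnit.unit, f), (g, SubHom.toFun (C.idt b') PUnit.unit)),
        Or.inr ⟨hg, (C.idt b').maps _ trivial⟩⟩
    have h1 := subApply (hC.idt_seq a b) (PUnit.unit, f)
    have h2 := subApply (hC.seq_idt a' b') (g, PUnit.unit)
    exact E.trans (congrArg (C.par a b a' b').toFun (Subtype.ext (Prod.ext h1 h2)))
  · have E := subApply (hC.exchange a b b a' a' b')
      ⟨((f, SubHom.toFun (C.idt b) PUnit.unit), (SubHom.toFun (C.idt a') PUnit.unit, g)),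
        Or.inr ⟨(C.idt a').maps _ trivial, hg⟩⟩
    have h1 := subApply (hC.seq_idt a b) (f, PUnit.unit)
    have h2 := subApply (hC.idt_seq a' b') (PUnit.unit, g)
    exact E.trans (congrArg (C.par a b a' b').toFun (Subtype.ext (Prod.ext h1 h2)))
  · have E := subApply (hC.exchange a' b' b' a a b)
      ⟨((g, SubHom.toFun (C.idt b') PUnit.unit), (SubHom.toFun (C.idt a) PUnit.unit, f)),
        Or.inl ⟨hg, (C.idt b').maps _ trivial⟩⟩
    have h1 := subApply (hC.seq_idt a' b') (g, PUnit.unit)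
    have h2 := subApply (hC.idt_seq a b) (PUnit.unit, f)
    exact E.trans (congrArg (C.par a' b' a b).toFun (Subtype.ext (Prod.ext h1 h2)))
  · have E := subApply (hC.exchange a' a' b' a b b)
      ⟨((SubHom.toFun (C.idt a') PUnit.unit, g), (f, SubHom.toFun (C.idt b) PUnit.unit)),
        Or.inl ⟨(C.idt a').maps _ trivial, hg⟩⟩
    have h1 := subApply (hC.idt_seq a' b') (PUnit.unit, g)
    have h2 := subApply (hC.seq_idt a b) (f, PUnit.unit)
    exact E.trans (congrArg (C.par a' b' a b).toFun (Subtype.ext (Prod.ext h1 h2)))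
end

section
/- There is a functor 𝔉 : Freyd → Subset-Freyd defined on objects by sending a Freyd category J : M → C to the Subset-Freyd category 𝔉(C) : M^op × M → Subset with 𝔉(C)(a,b) = (J(M(a,b)), C(a,b)) and 𝔉(C)(f,g) = C(Jf, Jg), with structure maps idt(⋆) = id, seq(f,g) = g∘f, zero(⋆) = id, and par(f₁,f₂) = f₁ ⊗ f₂; and on morphisms by 𝔉(F) = F. -/
set_option linter.unusedVariables false
open CategoryTheory CategoryTheory.Limits MonoidalCategory

universe w v u v₁ u₁ v₂ u₂ v₃ u₃

/-- The data of a Freyd category over the monoidal category `M`: a premonoidal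
category with the same objects as `M` (with whiskerings `wL`, `wR`) together with an
identity-on-objects strict premonoidal functor `J`. -/
structure FreydData (M : Type u₂) [Category.{v₂} M] [MonoidalCategory M] where
  hom : M → M → Type u
  ide : ∀ a : M, hom a a
  comp : ∀ {a b c : M}, hom a b → hom b c → hom a c
  wL : ∀ (x : M) {a b : M}, hom a b → hom (x ⊗ a) (x ⊗ b)
  wR : ∀ {a b : M}, hom a b → ∀ x : M, hom (a ⊗ x) (b ⊗ x)
  J : ∀ {a b : M}, (a ⟶ b) → hom a b

/-- Centrality of a morphism in the premonoidal part of a Freyd category. -/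
def FreydData.Central {M : Type u₂} [Category.{v₂} M] [MonoidalCategory M]
    (F : FreydData.{u} M) {a b : M} (f : F.hom a b) : Prop :=
  (∀ {a' b' : M} (g : F.hom a' b'),
      F.comp (F.wR f a') (F.wL b g) = F.comp (F.wL a g) (F.wR f b')) ∧
  (∀ {a' b' : M} (g : F.hom a' b'),
      F.comp (F.wL a' f) (F.wR g b) = F.comp (F.wR g a) (F.wL b' f))

/-- The data of a Freyd category is an actual Freyd category: `C` is a premonoidal
category, `J` is an identity-on-objects strict premonoidal functor, and the image of
`J` is central. -/
structure IsFreyd {M : Type u₂} [Category.{v₂} M] [MonoidalCategory M]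
    (F : FreydData.{u} M) : Prop where
  id_comp : ∀ {a b : M} (f : F.hom a b), F.comp (F.ide a) f = f
  comp_id : ∀ {a b : M} (f : F.hom a b), F.comp f (F.ide b) = f
  comp_assoc : ∀ {a b c e : M} (f : F.hom a b) (g : F.hom b c) (h : F.hom c e),
    F.comp (F.comp f g) h = F.comp f (F.comp g h)
  J_id : ∀ a : M, F.J (𝟙 a) = F.ide a
  J_comp : ∀ {a b c : M} (f : a ⟶ b) (g : b ⟶ c), F.J (f ≫ g) = F.comp (F.J f) (F.J g)
  wL_id : ∀ x a : M, F.wL x (F.ide a) = F.ide (x ⊗ a)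
  wL_comp : ∀ (x : M) {a b c : M} (f : F.hom a b) (g : F.hom b c),
    F.wL x (F.comp f g) = F.comp (F.wL x f) (F.wL x g)
  wR_id : ∀ a x : M, F.wR (F.ide a) x = F.ide (a ⊗ x)
  wR_comp : ∀ {a b c : M} (f : F.hom a b) (g : F.hom b c) (x : M),
    F.wR (F.comp f g) x = F.comp (F.wR f x) (F.wR g x)
  wL_J : ∀ (x : M) {a b : M} (f : a ⟶ b), F.wL x (F.J f) = F.J (x ◁ f)
  wR_J : ∀ {a b : M} (f : a ⟶ b) (x : M), F.wR (F.J f) x = F.J (f ▷ x)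
  central_J : ∀ {a b : M} (f : a ⟶ b), F.Central (F.J f)
  assoc_nat₁ : ∀ {a b : M} (f : F.hom a b) (y z : M),
    F.comp (F.wR (F.wR f y) z) (F.J (α_ b y z).hom)
      = F.comp (F.J (α_ a y z).hom) (F.wR f (y ⊗ z))
  assoc_nat₂ : ∀ (x : M) {a b : M} (f : F.hom a b) (z : M),
    F.comp (F.wR (F.wL x f) z) (F.J (α_ x b z).hom)
      = F.comp (F.J (α_ x a z).hom) (F.wL x (F.wR f z))
  assoc_nat₃ : ∀ (x y : M) {a b : M} (f : F.hom a b),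
    F.comp (F.wL (x ⊗ y) f) (F.J (α_ x y b).hom)
      = F.comp (F.J (α_ x y a).hom) (F.wL x (F.wL y f))
  lunit_nat : ∀ {a b : M} (f : F.hom a b),
    F.comp (F.wL (𝟙_ M) f) (F.J (λ_ b).hom) = F.comp (F.J (λ_ a).hom) f
  runit_nat : ∀ {a b : M} (f : F.hom a b),
    F.comp (F.wR f (𝟙_ M)) (F.J (ρ_ b).hom) = F.comp (F.J (ρ_ a).hom) f

/-- A morphism of Freyd categories: a strong monoidal functor `F₀` on the monoidal
parts and a strong premonoidal functor `F₁` on the premonoidal parts commuting with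
the `J`s. -/
structure FreydHom {M : Type u₂} {M' : Type u₃} [Category.{v₂} M] [MonoidalCategory M]
    [Category.{v₃} M'] [MonoidalCategory M'] (C : FreydData.{u} M)
    (C' : FreydData.{u'} M') where
  F₀ : StrongMonData M M'
  strong : IsStrongMon F₀
  F₁ : ∀ {a b : M}, C.hom a b → C'.hom (F₀.T.obj a) (F₀.T.obj b)
  F₁_id : ∀ a : M, F₁ (C.ide a) = C'.ide (F₀.T.obj a)
  F₁_comp : ∀ {a b c : M} (f : C.hom a b) (g : C.hom b c),
    F₁ (C.comp f g) = C'.comp (F₁ f) (F₁ g)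
  F₁_J : ∀ {a b : M} (f : a ⟶ b), F₁ (C.J f) = C'.J (F₀.T.map f)
  F₁_wL : ∀ (x : M) {a b : M} (f : C.hom a b),
    C'.comp (C'.J (F₀.μm x a).hom) (F₁ (C.wL x f))
      = C'.comp (C'.wL (F₀.T.obj x) (F₁ f)) (C'.J (F₀.μm x b).hom)
  F₁_wR : ∀ {a b : M} (f : C.hom a b) (x : M),
    C'.comp (C'.J (F₀.μm a x).hom) (F₁ (C.wR f x))
      = C'.comp (C'.wR (F₁ f) (F₀.T.obj x)) (C'.J (F₀.μm b x).hom)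

/-- The functor `𝔉 : Freyd → Subset-Freyd` on objects: `𝔉(C)(a,b)` is `C(a,b)` with
the image of `J` as distinguished subset. -/
def frey2sub {M : Type u₂} [Category.{v₂} M] [MonoidalCategory M]
    (F : FreydData.{u} M) (h : IsFreyd F) : VFreydData subsetDuo.{u} M where
  obj a b := ⟨F.hom a b, Set.range (fun f : a ⟶ b => F.J f)⟩
  map f g := ⟨fun k => F.comp (F.J f) (F.comp k (F.J g)),
    fun k hk => by
      obtain ⟨k', rfl⟩ := hk
      exact ⟨f ≫ k' ≫ g, by simp only [h.J_comp]⟩⟩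
  idt a := ⟨fun _ => F.ide a, fun _ _ => ⟨𝟙 a, h.J_id a⟩⟩
  seq a b c := ⟨fun p => F.comp p.1 p.2,
    fun p hp => by
      obtain ⟨⟨k₁, e₁⟩, ⟨k₂, e₂⟩⟩ := hp
      exact ⟨k₁ ≫ k₂, by simp only [h.J_comp, e₁, e₂]⟩⟩
  zero := ⟨fun _ => F.ide (𝟙_ M), fun _ _ => ⟨𝟙 (𝟙_ M), h.J_id _⟩⟩
  par a₁ b₁ a₂ b₂ := ⟨fun p => F.comp (F.wR p.val.1 a₂) (F.wL b₁ p.val.2),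
    fun p hp => by
      obtain ⟨⟨k₁, e₁⟩, ⟨k₂, e₂⟩⟩ := hp
      exact ⟨k₁ ⊗ₘ k₂, by
        simp only [MonoidalCategory.tensorHom_def, h.J_comp, ← h.wR_J, ← h.wL_J, e₁, e₂]⟩⟩

/-- The functor `𝔘 : Subset-Freyd → Freyd` on objects: `𝔘(C)` has the underlying sets
of `C(a,b)` as homsets, with composition `seq`, identities `idt(⋆)`,
`J(f) = C(id,f)(idt(⋆))`, and whiskerings induced by `par` and `idt(⋆)`. -/
def sub2frey {M : Type u₂} [Category.{v₂} M] [MonoidalCategory M]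
    (C : VFreydData subsetDuo.{u} M) : FreydData.{u} M where
  hom a b := (C.obj a b).carrier
  ide a := SubHom.toFun (C.idt a) PUnit.unit
  comp f g := SubHom.toFun (C.seq _ _ _) (f, g)
  wL := fun x {a b} f => SubHom.toFun (C.par x x a b)
    ⟨(SubHom.toFun (C.idt x) PUnit.unit, f), Or.inl ((C.idt x).maps _ trivial)⟩
  wR := fun {a b} f x => SubHom.toFun (C.par a b x x)
    ⟨(f, SubHom.toFun (C.idt x) PUnit.unit), Or.inr ((C.idt x).maps _ trivial)⟩
  J f := SubHom.toFun (C.map (𝟙 _) f) (SubHom.toFun (C.idt _) PUnit.unit)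


private lemma fcomp_congr {M : Type u₂} [Category.{v₂} M] [MonoidalCategory M]
    {F : FreydData.{u} M} (h : IsFreyd F) {a b b' c e : M} {f : F.hom a b} {g : F.hom b c}
    {f' : F.hom a b'} {g' : F.hom b' c} (hfg : F.comp f g = F.comp f' g') (t : F.hom c e) :
    F.comp f (F.comp g t) = F.comp f' (F.comp g' t) := by
  rw [← h.comp_assoc, hfg, h.comp_assoc]

private lemma fJ_cancel {M : Type u₂} [Category.{v₂} M] [MonoidalCategory M]
    {F : FreydData.{u} M} (h : IsFreyd F) {a b c : M} (u : a ⟶ b) (v : b ⟶ a)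
    (huv : u ≫ v = 𝟙 a) (t : F.hom a c) :
    F.comp (F.J u) (F.comp (F.J v) t) = t := by
  rw [← h.comp_assoc, ← h.J_comp, huv, h.J_id, h.id_comp]

/-- There is a functor `𝔉 : Freyd → Subset-Freyd`, defined on objects by
`𝔉(C)(a,b) = (J(M(a,b)), C(a,b))` and `𝔉(C)(f,g) = C(Jf, Jg)`, with structure maps
`idt(⋆) = id`, `seq(f,g) = g ∘ f`, `zero(⋆) = id`, `par(f₁,f₂) = f₁ ⊗ f₂`, and acting
as the identity on morphisms. -/
theorem frey2sub_functor :
    (∀ {M : Type u₂} [Category.{v₂} M] [MonoidalCategory M]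
      (F : FreydData.{u} M) (h : IsFreyd F), IsVFreyd (frey2sub F h)) ∧
    (∀ {M : Type u₂} {M' : Type u₃} [Category.{v₂} M] [MonoidalCategory M]
      [Category.{v₃} M'] [MonoidalCategory M']
      (F : FreydData.{u} M) (h : IsFreyd F) (F' : FreydData.{u} M') (h' : IsFreyd F')
      (G : FreydHom F F'),
      ∃ G' : VFreydHom (frey2sub F h) (frey2sub F' h'),
        G'.F₀ = G.F₀ ∧
        ∀ a b : M, HEq (SubHom.toFun (G'.app a b))
          (fun f : F.hom a b => (G.F₁ f : F'.hom (G.F₀.T.obj a) (G.F₀.T.obj b)))) := by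
  constructor
  · intro M _ _ F h
    constructor
    case map_id =>
      intro a b
      refine SubHom.ext (funext fun (k : F.hom a b) => ?_)
      show F.comp (F.J (𝟙 a)) (F.comp k (F.J (𝟙 b))) = k
      simp only [h.J_id, h.id_comp, h.comp_id]
    case map_comp =>
      intro a a' a'' b b' b'' f f' g g'
      refine SubHom.ext (funext fun (k : F.hom a b) => ?_)
      show F.comp (F.J (f' ≫ f)) (F.comp k (F.J (g ≫ g')))
        = F.comp (F.J f') (F.comp (F.comp (F.J f) (F.comp k (F.J g))) (F.J g'))
      simp only [h.J_comp, h.comp_assoc]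
    case idt_extra =>
      intro a b f
      refine SubHom.ext (funext fun _ => ?_)
      show F.comp (F.J (𝟙 a)) (F.comp (F.ide a) (F.J f))
        = F.comp (F.J f) (F.comp (F.ide b) (F.J (𝟙 b)))
      simp only [h.J_id, h.id_comp, h.comp_id]
    case seq_nat =>
      intro a a' c c' f g b
      refine SubHom.ext (funext fun (p : F.hom a b × F.hom b c) => ?_)
      show F.comp (F.comp (F.J f) (F.comp p.1 (F.J (𝟙 b))))
          (F.comp (F.J (𝟙 b)) (F.comp p.2 (F.J g)))
        = F.comp (F.J f) (F.comp (F.comp p.1 p.2) (F.J g))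
      simp only [h.J_id, h.id_comp, h.comp_id, h.comp_assoc]
    case seq_extra =>
      intro b b' f a c
      refine SubHom.ext (funext fun (p : F.hom a b × F.hom b' c) => ?_)
      show F.comp (F.comp (F.J (𝟙 a)) (F.comp p.1 (F.J f))) p.2
        = F.comp p.1 (F.comp (F.J f) (F.comp p.2 (F.J (𝟙 c))))
      simp only [h.J_id, h.id_comp, h.comp_id, h.comp_assoc]
    case par_nat =>
      intro a₁ a₁' b₁ b₁' a₂ a₂' b₂ b₂' f₁ g₁ f₂ g₂
      refine SubHom.ext (funext fun p => ?_)
      obtain ⟨⟨(k₁ : F.hom a₁ b₁), (k₂ : F.hom a₂ b₂)⟩, hp⟩ := p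
      show F.comp (F.wR (F.comp (F.J f₁) (F.comp k₁ (F.J g₁))) a₂')
          (F.wL b₁' (F.comp (F.J f₂) (F.comp k₂ (F.J g₂))))
        = F.comp (F.J (f₁ ⊗ₘ f₂))
            (F.comp (F.comp (F.wR k₁ a₂) (F.wL b₁ k₂)) (F.J (g₁ ⊗ₘ g₂)))
      rw [MonoidalCategory.tensorHom_def f₁ f₂, MonoidalCategory.tensorHom_def g₁ g₂,
        h.J_comp, h.J_comp, ← h.wR_J, ← h.wL_J, ← h.wR_J, ← h.wL_J,
        h.wR_comp, h.wR_comp, h.wL_comp, h.wL_comp]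
      simp only [h.comp_assoc]
      rw [fcomp_congr h ((h.central_J f₂).2 k₁),
        fcomp_congr h ((h.central_J g₁).1 k₂).symm,
        fcomp_congr h ((h.central_J g₁).1 (F.J f₂)).symm]
    case idt_seq =>
      intro a b
      refine SubHom.ext (funext fun p => ?_)
      show F.comp (F.ide a) p.2 = p.2
      exact h.id_comp _
    case seq_idt =>
      intro a b
      refine SubHom.ext (funext fun p => ?_)
      show F.comp p.1 (F.ide b) = p.1
      exact h.comp_id _
    case seq_assoc =>
      intro a b c e
      refine SubHom.ext (funext fun p => ?_)
      show F.comp (F.comp p.1.1 p.1.2) p.2 = F.comp p.1.1 (F.comp p.1.2 p.2)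
      exact h.comp_assoc _ _ _
    case zero_par =>
      intro a b
      refine SubHom.ext (funext fun (p : {q : PUnit × F.hom a b // _}) => ?_)
      show F.comp (F.J (λ_ a).inv)
          (F.comp (F.comp (F.wR (F.ide (𝟙_ M)) a) (F.wL (𝟙_ M) p.val.2)) (F.J (λ_ b).hom))
        = p.val.2
      rw [h.wR_id, h.id_comp, h.lunit_nat, ← h.comp_assoc, ← h.J_comp,
        Iso.inv_hom_id, h.J_id, h.id_comp]
    case par_zero =>
      intro a b
      refine SubHom.ext (funext fun (p : {q : F.hom a b × PUnit // _}) => ?_)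
      show F.comp (F.J (ρ_ a).inv)
          (F.comp (F.comp (F.wR p.val.1 (𝟙_ M)) (F.wL b (F.ide (𝟙_ M)))) (F.J (ρ_ b).hom))
        = p.val.1
      rw [h.wL_id, h.comp_id, h.runit_nat, ← h.comp_assoc, ← h.J_comp,
        Iso.inv_hom_id, h.J_id, h.id_comp]
    case par_assoc =>
      intro a₁ b₁ a₂ b₂ a₃ b₃
      refine SubHom.ext (funext fun p => ?_)
      show F.comp (F.J (α_ a₁ a₂ a₃).inv)
          (F.comp (F.comp (F.wR (F.comp (F.wR p.val.1.val.1 a₂) (F.wL b₁ p.val.1.val.2)) a₃)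
              (F.wL (b₁ ⊗ b₂) p.val.2)) (F.J (α_ b₁ b₂ b₃).hom))
        = F.comp (F.wR p.val.1.val.1 (a₂ ⊗ a₃))
            (F.wL b₁ (F.comp (F.wR p.val.1.val.2 a₃) (F.wL b₂ p.val.2)))
      rw [h.wR_comp]
      simp only [h.comp_assoc]
      rw [h.assoc_nat₃ b₁ b₂ p.val.2,
        fcomp_congr h (h.assoc_nat₂ b₁ p.val.1.val.2 a₃),
        fcomp_congr h (h.assoc_nat₁ p.val.1.val.1 a₂ a₃),
        fJ_cancel h _ _ (Iso.inv_hom_id _), h.wL_comp]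
    case idt_zero =>
      refine SubHom.ext (funext fun _ => ?_)
      rfl
    case idt_par =>
      intro a b
      refine SubHom.ext (funext fun p => ?_)
      show F.ide (a ⊗ b) = F.comp (F.wR (F.ide a) b) (F.wL a (F.ide b))
      rw [h.wR_id, h.wL_id, h.id_comp]
    case seq_zero =>
      refine SubHom.ext (funext fun _ => ?_)
      show F.comp (F.ide (𝟙_ M)) (F.ide (𝟙_ M)) = F.ide (𝟙_ M)
      exact h.id_comp _
    case exchange =>
      intro a₁ b₁ c₁ a₂ b₂ c₂
      refine SubHom.ext (funext fun p => ?_)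
      obtain ⟨⟨⟨(f₁ : F.hom a₁ b₁), (g₁ : F.hom b₁ c₁)⟩, ⟨(f₂ : F.hom a₂ b₂), (g₂ : F.hom b₂ c₂)⟩⟩, hp⟩ := p
      show F.comp (F.comp (F.wR f₁ a₂) (F.wL b₁ f₂)) (F.comp (F.wR g₁ b₂) (F.wL c₁ g₂))
        = F.comp (F.wR (F.comp f₁ g₁) a₂) (F.wL c₁ (F.comp f₂ g₂))
      rw [h.wR_comp, h.wL_comp]
      simp only [h.comp_assoc]
      congr 1
      have key : F.comp (F.wL b₁ f₂) (F.wR g₁ b₂) = F.comp (F.wR g₁ a₂) (F.wL c₁ f₂) := by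
        rcases hp with ⟨-, ⟨k, hk⟩⟩ | ⟨⟨k, hk⟩, -⟩
        · have hg : g₁ = F.J k := hk.symm
          rw [hg]
          exact ((h.central_J k).1 f₂).symm
        · have hf : f₂ = F.J k := hk.symm
          rw [hf]
          exact (h.central_J k).2 g₁
      exact fcomp_congr h key _
  · intro M M' _ _ _ _ F h F' h' G
    refine ⟨⟨G.F₀, G.strong, fun a b => ⟨fun f => G.F₁ f, ?_⟩, ?_, ?_, ?_, ?_⟩,
      rfl, fun a b => HEq.rfl⟩
    · intro f hf
      obtain ⟨k, rfl⟩ := hf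
      exact ⟨G.F₀.T.map k, (G.F₁_J k).symm⟩
    · intro a a' b b' f g
      refine SubHom.ext (funext fun (k : F.hom a b) => ?_)
      show G.F₁ (F.comp (F.J f) (F.comp k (F.J g)))
        = F'.comp (F'.J (G.F₀.T.map f)) (F'.comp (G.F₁ k) (F'.J (G.F₀.T.map g)))
      rw [G.F₁_comp, G.F₁_comp, G.F₁_J, G.F₁_J]
    · intro a
      refine SubHom.ext (funext fun _ => ?_)
      exact G.F₁_id a
    · intro a b c
      refine SubHom.ext (funext fun p => ?_)
      exact G.F₁_comp p.1 p.2
    · intro a₁ b₁ a₂ b₂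
      refine SubHom.ext (funext fun p => ?_)
      obtain ⟨⟨(k₁ : F.hom a₁ b₁), (k₂ : F.hom a₂ b₂)⟩, hp⟩ := p
      show F'.comp (F'.J (𝟙 (G.F₀.T.obj a₁ ⊗ G.F₀.T.obj a₂)))
          (F'.comp (F'.comp (F'.wR (G.F₁ k₁) (G.F₀.T.obj a₂))
              (F'.wL (G.F₀.T.obj b₁) (G.F₁ k₂))) (F'.J (G.F₀.μm b₁ b₂).hom))
        = F'.comp (F'.J (G.F₀.μm a₁ a₂).hom)
            (F'.comp (G.F₁ (F.comp (F.wR k₁ a₂) (F.wL b₁ k₂)))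
              (F'.J (𝟙 (G.F₀.T.obj (b₁ ⊗ b₂)))))
      rw [h'.J_id, h'.J_id, h'.id_comp, h'.comp_id, G.F₁_comp]
      conv_rhs => rw [← h'.comp_assoc, G.F₁_wR, h'.comp_assoc, G.F₁_wL, ← h'.comp_assoc]
end

section
/- There is a functor 𝔘 : Subset-Freyd → Freyd sending a Subset-Freyd category C : M^op × M → Subset to the Freyd category J : M → 𝔘(C) where: 𝔘(C) has the same objects as M and homsets 𝔘(C)(a,b) = A where (X,A) := C(a,b), with composition g∘f = seq(f,g) and identity id_a = idt(⋆); J is the identity on objects and J(f) = C(id_a, f)(idt(⋆)) on morphisms; and the binoidal structure is a ⊗ b = a ⊕_M b on objects with a ⋊ f = par(idt(⋆), f) and f ⋉ b = par(f, idt(⋆)); on morphisms, 𝔘(F₀,F₁) is F₀ together with the functor acting as F₀ on objects and F₁ on homsets. -/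
set_option linter.unusedVariables false
open CategoryTheory CategoryTheory.Limits MonoidalCategory

universe w v u v₁ u₁ v₂ u₂ v₃ u₃

namespace Sub2FreyProof

lemma sh_congr {X Y : SubObj.{u}} {f g : X ⟶ Y} (e : f = g) (x : X.carrier) :
    f.toFun x = g.toFun x := congrFun (congrArg SubHom.toFun e) x

variable {M : Type u₂} [Category.{v₂} M] [MonoidalCategory M]

/-- The identity element of `sub2frey C`. -/
def em (C : VFreydData subsetDuo.{u} M) (a : M) : (C.obj a a).carrier :=
  (C.idt a).toFun PUnit.unit

/-- The `J` element of `sub2frey C`. -/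
def Jm (C : VFreydData subsetDuo.{u} M) {a b : M} (f : a ⟶ b) : (C.obj a b).carrier :=
  (C.map (𝟙 a) f).toFun ((C.idt a).toFun PUnit.unit)

lemma ide_mem (C : VFreydData subsetDuo.{u} M) (a : M) :
    em C a ∈ (C.obj a a).dist := (C.idt a).maps _ trivial

lemma Jm_mem (C : VFreydData subsetDuo.{u} M) {a b : M} (f : a ⟶ b) :
    Jm C f ∈ (C.obj a b).dist := (C.map (𝟙 a) f).maps _ (ide_mem C a)

variable {C : VFreydData subsetDuo.{u} M}

lemma par_app {a₁ b₁ a₂ b₂ : M} {u u' : (C.obj a₁ b₁).carrier} {v v' : (C.obj a₂ b₂).carrier}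
    (hu : u = u') (hv : v = v')
    (pr : u ∈ (C.obj a₁ b₁).dist ∨ v ∈ (C.obj a₂ b₂).dist)
    (pr' : u' ∈ (C.obj a₁ b₁).dist ∨ v' ∈ (C.obj a₂ b₂).dist) :
    (C.par a₁ b₁ a₂ b₂).toFun ⟨(u, v), pr⟩ = (C.par a₁ b₁ a₂ b₂).toFun ⟨(u', v'), pr'⟩ := by
  subst hu; subst hv; rfl

lemma mapIdPt (hC : IsVFreyd C) {a b : M} (x : (C.obj a b).carrier) : (C.map (𝟙 a) (𝟙 b)).toFun x = x :=
  sh_congr (hC.map_id a b) x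

lemma mapCompPt (hC : IsVFreyd C) {a a' a'' b b' b'' : M} (f : a' ⟶ a) (f' : a'' ⟶ a') (g : b ⟶ b')
    (g' : b' ⟶ b'') (x : (C.obj a b).carrier) :
    (C.map (f' ≫ f) (g ≫ g')).toFun x = (C.map f' g').toFun ((C.map f g).toFun x) :=
  sh_congr (hC.map_comp f f' g g') x

lemma idtExtraPt (hC : IsVFreyd C) {a b : M} (f : a ⟶ b) :
    (C.map (𝟙 a) f).toFun (em C a) = (C.map f (𝟙 b)).toFun (em C b) :=
  sh_congr (hC.idt_extra f) PUnit.unit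

lemma id_compPt (hC : IsVFreyd C) {a b : M} (f : (C.obj a b).carrier) :
    (C.seq a a b).toFun (em C a, f) = f :=
  sh_congr (hC.idt_seq a b) (PUnit.unit, f)

lemma comp_idPt (hC : IsVFreyd C) {a b : M} (f : (C.obj a b).carrier) :
    (C.seq a b b).toFun (f, em C b) = f :=
  sh_congr (hC.seq_idt a b) (f, PUnit.unit)

lemma assocPt (hC : IsVFreyd C) {a b c e : M} (f : (C.obj a b).carrier) (g : (C.obj b c).carrier)
    (h : (C.obj c e).carrier) :
    (C.seq a c e).toFun ((C.seq a b c).toFun (f, g), h)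
      = (C.seq a b e).toFun (f, (C.seq b c e).toFun (g, h)) :=
  sh_congr (hC.seq_assoc a b c e) ((f, g), h)

lemma compJPt (hC : IsVFreyd C) {a b c : M} (h : (C.obj a b).carrier) (g : b ⟶ c) :
    (C.seq a b c).toFun (h, Jm C g) = (C.map (𝟙 a) g).toFun h := by
  have h1 := sh_congr (hC.seq_nat (𝟙 a) g b) (h, em C b)
  have h2 : (C.seq a b c).toFun (h, Jm C g)
      = (C.seq a b c).toFun ((C.map (𝟙 a) (𝟙 b)).toFun h, Jm C g) := by
    rw [mapIdPt hC]
  exact h2.trans (h1.trans (congrArg (C.map (𝟙 a) g).toFun (comp_idPt hC h)))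

lemma JcompPt (hC : IsVFreyd C) {a' a b : M} (f : a' ⟶ a) (h : (C.obj a b).carrier) :
    (C.seq a' a b).toFun (Jm C f, h) = (C.map f (𝟙 b)).toFun h := by
  have h1 := sh_congr (hC.seq_nat f (𝟙 b) a) (em C a, h)
  have h2 : (C.seq a' a b).toFun (Jm C f, h)
      = (C.seq a' a b).toFun ((C.map f (𝟙 a)).toFun (em C a),
          (C.map (𝟙 a) (𝟙 b)).toFun h) := by
    rw [mapIdPt hC]
    exact congrArg (fun z => (C.seq a' a b).toFun (z, h)) (idtExtraPt hC f)
  exact h2.trans (h1.trans (congrArg (C.map f (𝟙 b)).toFun (id_compPt hC h)))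

lemma ideParPt (hC : IsVFreyd C) (a b : M)
    (pr : em C a ∈ (C.obj a a).dist ∨ em C b ∈ (C.obj b b).dist) :
    (C.par a a b b).toFun ⟨(em C a, em C b), pr⟩ = em C (a ⊗ b) :=
  (sh_congr (hC.idt_par a b) ⟨(PUnit.unit, PUnit.unit), Or.inl trivial⟩).symm

lemma zeroPt (hC : IsVFreyd C) (x : PUnit) : C.zero.toFun x = em C (𝟙_ M) :=
  (sh_congr hC.idt_zero x).symm

/-- `sub2frey` sends `V`-Freyd categories to Freyd categories. -/
theorem isFreyd (C : VFreydData subsetDuo.{u} M) (hC : IsVFreyd C) :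
    IsFreyd (sub2frey C) where
  id_comp := fun {a b} f => id_compPt hC f
  comp_id := fun {a b} f => comp_idPt hC f
  comp_assoc := fun {a b c e} f g h => assocPt hC f g h
  J_id := fun a => mapIdPt hC (em C a)
  J_comp := fun {a b c} f g => by
    have h2 := mapCompPt hC (𝟙 a) (𝟙 a) f g (em C a)
    rw [Category.comp_id] at h2
    exact h2.trans (compJPt hC (Jm C f) g).symm
  wL_id := fun x a => ideParPt hC x a _
  wL_comp := by
    intro x a b c f g
    have h1 := sh_congr (hC.exchange x x x a b c)
      ⟨((em C x, em C x), (f, g)), Or.inl ⟨ide_mem C x, ide_mem C x⟩⟩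
    refine Eq.trans ?_ h1.symm
    exact par_app (id_compPt hC (em C x)).symm rfl _ _
  wR_id := fun a x => ideParPt hC a x _
  wR_comp := by
    intro a b c f g x
    have h1 := sh_congr (hC.exchange a b c x x x)
      ⟨((f, g), (em C x, em C x)), Or.inr ⟨ide_mem C x, ide_mem C x⟩⟩
    refine Eq.trans ?_ h1.symm
    exact par_app rfl (id_compPt hC (em C x)).symm _ _
  wL_J := by
    intro x a b f
    have h1 := sh_congr (hC.par_nat (𝟙 x) (𝟙 x) (𝟙 a) f)
      ⟨(em C x, em C a), Or.inl (ide_mem C x)⟩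
    refine Eq.trans (Eq.trans ?_ h1) ?_
    · exact par_app (mapIdPt hC (em C x)).symm rfl _ _
    · show (C.map (𝟙 x ⊗ₘ 𝟙 a) (𝟙 x ⊗ₘ f)).toFun
          ((C.par x x a a).toFun ⟨(em C x, em C a), Or.inl (ide_mem C x)⟩) = Jm C (x ◁ f)
      rw [ideParPt hC, MonoidalCategory.id_tensorHom_id, MonoidalCategory.id_tensorHom]
      rfl
  wR_J := by
    intro a b f x
    have h1 := sh_congr (hC.par_nat (𝟙 a) f (𝟙 x) (𝟙 x))
      ⟨(em C a, em C x), Or.inr (ide_mem C x)⟩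
    refine Eq.trans (Eq.trans ?_ h1) ?_
    · exact par_app rfl (mapIdPt hC (em C x)).symm _ _
    · show (C.map (𝟙 a ⊗ₘ 𝟙 x) (f ⊗ₘ 𝟙 x)).toFun
          ((C.par a a x x).toFun ⟨(em C a, em C x), Or.inr (ide_mem C x)⟩) = Jm C (f ▷ x)
      rw [ideParPt hC, MonoidalCategory.id_tensorHom_id, MonoidalCategory.tensorHom_id]
      rfl
  central_J := by
    intro a b f
    constructor
    · intro a' b' g
      have h1 := sh_congr (hC.exchange a b b a' a' b')
        ⟨((Jm C f, em C b), (em C a', g)), Or.inl ⟨Jm_mem C f, ide_mem C b⟩⟩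
      have h2 := sh_congr (hC.exchange a a b a' b' b')
        ⟨((em C a, Jm C f), (g, em C b')), Or.inl ⟨ide_mem C a, Jm_mem C f⟩⟩
      refine h1.trans (Eq.trans ?_ h2.symm)
      exact par_app ((comp_idPt hC (Jm C f)).trans (id_compPt hC (Jm C f)).symm)
        ((id_compPt hC g).trans (comp_idPt hC g).symm) _ _
    · intro a' b' g
      have h1 := sh_congr (hC.exchange a' a' b' a b b)
        ⟨((em C a', g), (Jm C f, em C b)), Or.inr ⟨Jm_mem C f, ide_mem C b⟩⟩
      have h2 := sh_congr (hC.exchange a' b' b' a a b)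
        ⟨((g, em C b'), (em C a, Jm C f)), Or.inr ⟨ide_mem C a, Jm_mem C f⟩⟩
      refine h1.trans (Eq.trans ?_ h2.symm)
      exact par_app ((id_compPt hC g).trans (comp_idPt hC g).symm)
        ((comp_idPt hC (Jm C f)).trans (id_compPt hC (Jm C f)).symm) _ _
  assoc_nat₁ := by
    intro a b f y z
    have h1 := sh_congr (hC.par_assoc a b y y z z)
      ⟨(⟨(f, em C y), Or.inr (ide_mem C y)⟩, em C z), Or.inr (ide_mem C z)⟩
    have h2 : (C.map (α_ a y z).inv (α_ b y z).hom).toFun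
        ((sub2frey C).wR ((sub2frey C).wR f y) z) = (sub2frey C).wR f (y ⊗ z) := by
      refine h1.trans ?_
      exact par_app rfl (ideParPt hC y z _) _ _
    refine ((compJPt hC _ _).trans ?_).trans (JcompPt hC _ _).symm
    rw [← h2]
    erw [← mapCompPt hC]
    simp
  assoc_nat₂ := by
    intro x a b f z
    have h1 := sh_congr (hC.par_assoc x x a b z z)
      ⟨(⟨(em C x, f), Or.inl (ide_mem C x)⟩, em C z), Or.inr (ide_mem C z)⟩
    have h2 : (C.map (α_ x a z).inv (α_ x b z).hom).toFun
        ((sub2frey C).wR ((sub2frey C).wL x f) z)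
        = (sub2frey C).wL x ((sub2frey C).wR f z) := h1
    refine ((compJPt hC _ _).trans ?_).trans (JcompPt hC _ _).symm
    rw [← h2]
    erw [← mapCompPt hC]
    simp
  assoc_nat₃ := by
    intro x y a b f
    have h1 := sh_congr (hC.par_assoc x x y y a b)
      ⟨(⟨(em C x, em C y), Or.inl (ide_mem C x)⟩, f), Or.inl ⟨ide_mem C x, ide_mem C y⟩⟩
    have h2 : (C.map (α_ x y a).inv (α_ x y b).hom).toFun
        ((sub2frey C).wL (x ⊗ y) f) = (sub2frey C).wL x ((sub2frey C).wL y f) := by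
      refine Eq.trans ?_ h1
      exact congrArg _ (par_app (ideParPt hC x y _).symm rfl _ _)
    refine ((compJPt hC _ _).trans ?_).trans (JcompPt hC _ _).symm
    rw [← h2]
    erw [← mapCompPt hC]
    simp
  lunit_nat := by
    intro a b f
    have h1 := sh_congr (hC.zero_par a b) ⟨(PUnit.unit, f), Or.inl trivial⟩
    have h2 : (C.map (λ_ a).inv (λ_ b).hom).toFun ((sub2frey C).wL (𝟙_ M) f) = f := by
      refine Eq.trans ?_ h1
      exact congrArg _ (par_app (zeroPt hC PUnit.unit).symm rfl _ _)
    refine ((compJPt hC _ _).trans ?_).trans (JcompPt hC _ _).symm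
    conv_rhs => rw [← h2]
    erw [← mapCompPt hC]
    simp
  runit_nat := by
    intro a b f
    have h1 := sh_congr (hC.par_zero a b) ⟨(f, PUnit.unit), Or.inr trivial⟩
    have h2 : (C.map (ρ_ a).inv (ρ_ b).hom).toFun ((sub2frey C).wR f (𝟙_ M)) = f := by
      refine Eq.trans ?_ h1
      exact congrArg _ (par_app rfl (zeroPt hC PUnit.unit).symm _ _)
    refine ((compJPt hC _ _).trans ?_).trans (JcompPt hC _ _).symm
    conv_rhs => rw [← h2]
    erw [← mapCompPt hC]
    simp

variable {M' : Type u₃} [Category.{v₃} M'] [MonoidalCategory M']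
  {C' : VFreydData subsetDuo.{u} M'}

lemma hidtPt (G : VFreydHom C C') (a : M) :
    (G.app a a).toFun (em C a) = em C' (G.F₀.T.obj a) :=
  sh_congr (G.hidt a) PUnit.unit

/-- `sub2frey` on morphisms. -/
def hom2hom (C : VFreydData subsetDuo.{u} M) (C' : VFreydData subsetDuo.{u} M')
    (hC : IsVFreyd C) (hC' : IsVFreyd C') (G : VFreydHom C C') :
    FreydHom (sub2frey C) (sub2frey C') where
  F₀ := G.F₀
  strong := G.strong
  F₁ := fun {a b} f => (G.app a b).toFun f
  F₁_id := fun a => hidtPt G a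
  F₁_comp := fun {a b c} f g => sh_congr (G.hseq a b c) (f, g)
  F₁_J := fun {a b} f => by
    refine (sh_congr (G.naturality (𝟙 a) f) (em C a)).trans ?_
    show (C'.map (G.F₀.T.map (𝟙 a)) (G.F₀.T.map f)).toFun ((G.app a a).toFun (em C a))
      = Jm C' (G.F₀.T.map f)
    rw [hidtPt G a, CategoryTheory.Functor.map_id]
    rfl
  F₁_wL := fun x {a b} f => by
    have hp := sh_congr (G.hpar x x a b) ⟨(em C x, f), Or.inl (ide_mem C x)⟩
    refine ((JcompPt hC' _ _).trans ?_).trans (compJPt hC' _ _).symm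
    refine hp.symm.trans ?_
    exact congrArg _ (par_app (hidtPt G x) rfl _ _)
  F₁_wR := fun {a b} f x => by
    have hp := sh_congr (G.hpar a b x x) ⟨(f, em C x), Or.inr (ide_mem C x)⟩
    refine ((JcompPt hC' _ _).trans ?_).trans (compJPt hC' _ _).symm
    refine hp.symm.trans ?_
    exact congrArg _ (par_app rfl (hidtPt G x) _ _)

end Sub2FreyProof

/-- There is a functor `𝔘 : Subset-Freyd → Freyd`, sending `C : M^op × M → Subset` to
the Freyd category with the underlying sets of `C(a,b)` as homsets, composition
`seq`, identities `idt(⋆)`, `J(f) = C(id,f)(idt(⋆))`, and whiskerings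
`a ⋊ f = par(idt(⋆), f)`, `f ⋉ b = par(f, idt(⋆))`; on morphisms, `𝔘(F₀,F₁)` is `F₀`
together with the functor acting as `F₀` on objects and `F₁` on homsets. -/
theorem sub2frey_functor :
    (∀ {M : Type u₂} [Category.{v₂} M] [MonoidalCategory M]
      (C : VFreydData subsetDuo.{u} M), IsVFreyd C → IsFreyd (sub2frey C)) ∧
    (∀ {M : Type u₂} {M' : Type u₃} [Category.{v₂} M] [MonoidalCategory M]
      [Category.{v₃} M'] [MonoidalCategory M']
      (C : VFreydData subsetDuo.{u} M) (C' : VFreydData subsetDuo.{u} M')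
      (hC : IsVFreyd C) (hC' : IsVFreyd C') (G : VFreydHom C C'),
      ∃ G' : FreydHom (sub2frey C) (sub2frey C'),
        G'.F₀ = G.F₀ ∧
        ∀ (a b : M) (f : (C.obj a b).carrier),
          HEq (G'.F₁ f) (SubHom.toFun (G.app a b) f)) := by
  refine ⟨fun {M} _ _ C hC => Sub2FreyProof.isFreyd C hC, ?_⟩
  intro M M' _ _ _ _ C C' hC hC' G
  exact ⟨Sub2FreyProof.hom2hom C C' hC hC' G, rfl, fun a b f => HEq.rfl⟩
end
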